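/- Let X be a complete, almost 3-hyperconvex metric space. Let A and A' be closed subsets of X that are almost externally 2-hyperconvex in X, let y ∈ A ∩ A' (so A ∩ A' is nonempty), and let x ∈ X with d(x,A) ≤ r and d(x,A') ≤ r. Set d := d(x,y) and s := d − r. Then for every ε > 0 and every δ > 0, if s ≥ 0 the intersection A ∩ A' ∩ B(x, r + δ) ∩ B(y, s + ε) is nonempty; and in any case the intersection A ∩ A' ∩ B(x, r + δ) is nonempty. -/
import Mathlib


/-- A metric space `X` is almost `n`-hyperconvex if for every family of `n` closed balls
`B(x i, r i)` with `d(x i, x j) ≤ r i + r j` and every `ε > 0`, the intersection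
`⋂ i, B(x i, r i + ε)` is nonempty. -/
def IsAlmostNHyperconvex (X : Type*) [MetricSpace X] (n : ℕ) : Prop :=
  ∀ (x : Fin n → X) (r : Fin n → ℝ),
    (∀ i j, dist (x i) (x j) ≤ r i + r j) →
    ∀ ε > (0 : ℝ), (⋂ i, Metric.closedBall (x i) (r i + ε)).Nonempty

/-- A subset `A` of a metric space `X` is almost externally `n`-hyperconvex in `X` if for
every family of `n` closed balls `B(x i, r i)` with `d(x i, A) ≤ r i` and
`d(x i, x j) ≤ r i + r j`, and every `ε > 0`, the intersection
`A ∩ ⋂ i, B(x i, r i + ε)` is nonempty. -/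
def IsAlmostExternallyNHyperconvex {X : Type*} [MetricSpace X] (A : Set X) (n : ℕ) : Prop :=
  ∀ (x : Fin n → X) (r : Fin n → ℝ),
    (∀ i, Metric.infDist (x i) A ≤ r i) →
    (∀ i j, dist (x i) (x j) ≤ r i + r j) →
    ∀ ε > (0 : ℝ), (A ∩ ⋂ i, Metric.closedBall (x i) (r i + ε)).Nonempty

open Metric

section helpers

variable {X : Type*} [MetricSpace X]

lemma pull2 {A : Set X} (hA : IsAlmostExternallyNHyperconvex A 2)
    (c₁ c₂ : X) (r₁ r₂ ε : ℝ)
    (h₁ : Metric.infDist c₁ A ≤ r₁) (h₂ : Metric.infDist c₂ A ≤ r₂)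
    (h₁₂ : dist c₁ c₂ ≤ r₁ + r₂) (hε : 0 < ε) :
    ∃ a ∈ A, dist a c₁ ≤ r₁ + ε ∧ dist a c₂ ≤ r₂ + ε := by
  have hr₁ : 0 ≤ r₁ := le_trans Metric.infDist_nonneg h₁
  have hr₂ : 0 ≤ r₂ := le_trans Metric.infDist_nonneg h₂
  obtain ⟨p, hpA, hp⟩ := hA ![c₁, c₂] ![r₁, r₂]
    (by intro i; fin_cases i <;> simpa)
    (by intro i j; fin_cases i <;> fin_cases j <;>
      simp [dist_comm] <;> linarith [dist_comm c₁ c₂ ▸ h₁₂])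
    ε hε
  refine ⟨p, hpA, ?_, ?_⟩
  · have := Set.mem_iInter.1 hp 0
    simpa [Metric.mem_closedBall] using this
  · have := Set.mem_iInter.1 hp 1
    simpa [Metric.mem_closedBall] using this

lemma mid3 (hX : IsAlmostNHyperconvex X 3)
    (c₁ c₂ c₃ : X) (r₁ r₂ r₃ ε : ℝ)
    (h1 : 0 ≤ r₁) (h2 : 0 ≤ r₂) (h3 : 0 ≤ r₃)
    (h12 : dist c₁ c₂ ≤ r₁ + r₂) (h13 : dist c₁ c₃ ≤ r₁ + r₃)
    (h23 : dist c₂ c₃ ≤ r₂ + r₃) (hε : 0 < ε) :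
    ∃ m : X, dist m c₁ ≤ r₁ + ε ∧ dist m c₂ ≤ r₂ + ε ∧ dist m c₃ ≤ r₃ + ε := by
  obtain ⟨p, hp⟩ := hX ![c₁, c₂, c₃] ![r₁, r₂, r₃]
    (by intro i j; fin_cases i <;> fin_cases j <;>
      simp [dist_comm] <;> linarith [dist_comm c₁ c₂ ▸ h12, dist_comm c₁ c₃ ▸ h13,
        dist_comm c₂ c₃ ▸ h23])
    ε hε
  refine ⟨p, ?_, ?_, ?_⟩
  · have := Set.mem_iInter.1 hp 0; simpa [Metric.mem_closedBall] using this
  · have := Set.mem_iInter.1 hp 1; simpa [Metric.mem_closedBall] using this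
  · have := Set.mem_iInter.1 hp 2; simpa [Metric.mem_closedBall] using this

lemma build_seq {α : Type*} (P : ℕ → α → Prop) (R : ℕ → α → α → Prop)
    (a0 : α) (h0 : P 0 a0)
    (step : ∀ n a, P n a → ∃ b, P (n+1) b ∧ R n a b) :
    ∃ f : ℕ → α, f 0 = a0 ∧ (∀ n, P n (f n)) ∧ (∀ n, R n (f n) (f (n+1))) := by
  let g : ∀ n : ℕ, {a : α // P n a} :=
    fun n => Nat.rec (motive := fun n => {a : α // P n a}) ⟨a0, h0⟩
      (fun n p => ⟨Classical.choose (step n p.1 p.2),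
        (Classical.choose_spec (step n p.1 p.2)).1⟩) n
  refine ⟨fun n => (g n).1, rfl, fun n => (g n).2, fun n => ?_⟩
  exact (Classical.choose_spec (step n (g n).1 (g n).2)).2

end helpers

section transport

variable {X : Type*} [MetricSpace X] {A A' : Set X}

/-- One step of the transport toward a target `w`. -/
lemma TLstep (hX : IsAlmostNHyperconvex X 3)
    (hA : IsAlmostExternallyNHyperconvex A 2)
    (hA' : IsAlmostExternallyNHyperconvex A' 2) (w : X) (τ : ℝ) (hτA : Metric.infDist w A ≤ τ)
    (hτB : Metric.infDist w A' ≤ τ)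
    (a b : X) (ha : a ∈ A) (hb : b ∈ A') (h θ : ℝ) (hh : 0 < h) (hθ : 0 < θ)
    (hab : dist a b ≤ h)
    (hdrive : τ + h + θ < max (dist a w) (dist b w)) :
    ∃ a' ∈ A, ∃ b' ∈ A',
      dist a' b' ≤ h + 6*θ ∧
      max (dist a' w) (dist b' w) ≤ max (dist a w) (dist b w) - h + 3*θ ∧
      max (dist a w) (dist b w) - h - 5*θ ≤ max (dist a' w) (dist b' w) ∧
      dist a a' ≤ h + 5*θ ∧ dist b b' ≤ h + 5*θ := by
  have hτ0 : 0 ≤ τ := le_trans Metric.infDist_nonneg hτA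
  set M := max (dist a w) (dist b w) with hM
  have hMa : dist a w ≤ M := le_max_left _ _
  have hMb : dist b w ≤ M := le_max_right _ _
  have hmax3 : max (M - h/2) τ = M - h/2 := max_eq_left (by linarith)
  -- midpoint
  obtain ⟨m, hma, hmb, hmw⟩ := mid3 hX a b w (h/2+θ) (h/2+θ) (M - h/2 + 2*θ) θ
    (by linarith) (by linarith) (by linarith) (by linarith)
    (by linarith) (by linarith [dist_comm a b ▸ hab]) hθ
  -- pull into A
  have hinfmA : Metric.infDist m A ≤ h/2 + 2*θ :=
    le_trans (Metric.infDist_le_dist_of_mem ha) (by linarith [dist_comm m a ▸ hma])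
  have hinfmB : Metric.infDist m A' ≤ h/2 + 2*θ :=
    le_trans (Metric.infDist_le_dist_of_mem hb) (by linarith [dist_comm m b ▸ hmb])
  have hmaxmw : dist m w - (h/2 + 2*θ) ≤ max (dist m w - (h/2+2*θ)) τ := le_max_left _ _
  have hmaxτ : τ ≤ max (dist m w - (h/2+2*θ)) τ := le_max_right _ _
  have hmaxup : max (dist m w - (h/2+2*θ)) τ ≤ M - h + θ :=
    max_le (by linarith) (by linarith)
  obtain ⟨a₂, ha₂, ha₂m, ha₂w⟩ := pull2 hA m w (h/2+2*θ)
    (max (dist m w - (h/2+2*θ)) τ + θ) θ hinfmA (by linarith) (by linarith) hθ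
  obtain ⟨b₂, hb₂, hb₂m, hb₂w⟩ := pull2 hA' m w (h/2+2*θ)
    (max (dist m w - (h/2+2*θ)) τ + θ) θ hinfmB (by linarith) (by linarith) hθ
  have haa₂ : dist a a₂ ≤ h + 5*θ := by
    have := dist_triangle a m a₂
    have h1 := dist_comm m a ▸ hma
    have h2 := dist_comm a₂ m ▸ ha₂m
    linarith
  have hbb₂ : dist b b₂ ≤ h + 5*θ := by
    have := dist_triangle b m b₂
    have h1 := dist_comm m b ▸ hmb
    have h2 := dist_comm b₂ m ▸ hb₂m
    linarith
  refine ⟨a₂, ha₂, b₂, hb₂, ?_, ?_, ?_, haa₂, hbb₂⟩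
  · have := dist_triangle a₂ m b₂
    have h2 := dist_comm b₂ m ▸ hb₂m
    linarith
  · exact max_le (by linarith) (by linarith)
  · have h1 : dist a w ≤ (h + 5*θ) + max (dist a₂ w) (dist b₂ w) := by
      have := dist_triangle a a₂ w
      have := le_max_left (dist a₂ w) (dist b₂ w)
      linarith
    have h2 : dist b w ≤ (h + 5*θ) + max (dist a₂ w) (dist b₂ w) := by
      have := dist_triangle b b₂ w
      have := le_max_right (dist a₂ w) (dist b₂ w)
      linarith
    have := max_le h1 h2
    linarith

/-- The transport lemma: move a pair of points from `A` and `A'` toward a target `w`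
while nearly preserving the gap. -/
lemma TL (hX : IsAlmostNHyperconvex X 3)
    (hA : IsAlmostExternallyNHyperconvex A 2)
    (hA' : IsAlmostExternallyNHyperconvex A' 2)
    (w : X) (τ : ℝ) (hτA : Metric.infDist w A ≤ τ) (hτB : Metric.infDist w A' ≤ τ) :
    ∀ n : ℕ, ∀ (a b : X) (h θ : ℝ), a ∈ A → b ∈ A' → 0 < h → 0 < θ → θ ≤ h →
    dist a b ≤ h → max (dist a w) (dist b w) ≤ τ + h + n * h →
    ∃ a' ∈ A, ∃ b' ∈ A',
      dist a' b' ≤ h + θ ∧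
      max (dist a' w) (dist b' w) ≤ τ + h + θ ∧
      min (max (dist a w) (dist b w)) τ - θ ≤ max (dist a' w) (dist b' w) ∧
      dist a a' ≤ max (dist a w) (dist b w) - max (dist a' w) (dist b' w) + θ ∧
      dist b b' ≤ max (dist a w) (dist b w) - max (dist a' w) (dist b' w) + θ := by
  intro n
  induction n with
  | zero =>
    intro a b h θ ha hb hh hθ hθh hab hM
    have hM' : max (dist a w) (dist b w) ≤ τ + h := by simpa using hM
    refine ⟨a, ha, b, hb, by linarith, le_trans hM' (by linarith), ?_, ?_, ?_⟩
    · have := min_le_left (max (dist a w) (dist b w)) τ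
      linarith
    · simp only [dist_self]; linarith
    · simp only [dist_self]; linarith
  | succ n ih =>
    intro a b h θ ha hb hh hθ hθh hab hM
    by_cases hc : max (dist a w) (dist b w) ≤ τ + h + θ
    · refine ⟨a, ha, b, hb, by linarith, hc, ?_, ?_, ?_⟩
      · have := min_le_left (max (dist a w) (dist b w)) τ
        linarith
      · simp only [dist_self]; linarith
      · simp only [dist_self]; linarith
    · push_neg at hc
      have hτ0 : 0 ≤ τ := le_trans Metric.infDist_nonneg hτA
      have hθ' : 0 < θ/32 := by linarith
      obtain ⟨a₂, ha₂, b₂, hb₂, hgap₂, hM₂up, hM₂lo, haa₂, hbb₂⟩ :=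
        TLstep hX hA hA' w τ hτA hτB a b ha hb h (θ/32) hh hθ' hab (by linarith)
      have hmeas : max (dist a₂ w) (dist b₂ w) ≤
          τ + (h + 6*(θ/32)) + n * (h + 6*(θ/32)) := by
        have hn0 : (0:ℝ) ≤ n := Nat.cast_nonneg n
        have : (n:ℝ) * h ≤ n * (h + 6*(θ/32)) := by nlinarith
        push_cast at hM
        linarith
      obtain ⟨a₃, ha₃, b₃, hb₃, hgap₃, hM₃up, hM₃lo, haa₃, hbb₃⟩ :=
        ih a₂ b₂ (h + 6*(θ/32)) (θ/2) ha₂ hb₂ (by linarith) (by linarith)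
          (by linarith) hgap₂ hmeas
      have hminM₂ : min (max (dist a₂ w) (dist b₂ w)) τ = τ :=
        min_eq_right (by linarith)
      rw [hminM₂] at hM₃lo
      have hminM : min (max (dist a w) (dist b w)) τ = τ :=
        min_eq_right (by linarith)
      refine ⟨a₃, ha₃, b₃, hb₃, by linarith, by linarith, by rw [hminM]; linarith, ?_, ?_⟩
      · have := dist_triangle a a₂ a₃
        linarith
      · have := dist_triangle b b₂ b₃
        linarith

/-- Core of one level: produce a point `m` close to both `A` and `A'`,
near the target ball around `w`, and nearly between `z` and `w`. -/
lemma levelcore (hX : IsAlmostNHyperconvex X 3)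
    (hA : IsAlmostExternallyNHyperconvex A 2)
    (hA' : IsAlmostExternallyNHyperconvex A' 2)
    (w : X) (τ : ℝ) (hτA : Metric.infDist w A ≤ τ) (hτB : Metric.infDist w A' ≤ τ)
    (z : X) (hzA : z ∈ A) (hzA' : z ∈ A') (γ : ℝ) (hγ : 0 < γ) :
    ∃ m : X, Metric.infDist m A ≤ 4*γ ∧ Metric.infDist m A' ≤ 4*γ ∧
      dist z m + dist m w ≤ dist z w + 10*γ ∧
      dist m w ≤ τ + 7*γ ∧
      min (dist z w - γ) τ - 8*γ ≤ dist m w := by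
  have hτ0 : 0 ≤ τ := le_trans Metric.infDist_nonneg hτA
  -- fresh pair near z
  obtain ⟨as, hasA, hasz, -⟩ := pull2 hA z z 0 0 γ
    (le_of_eq (Metric.infDist_zero_of_mem hzA)) (le_of_eq (Metric.infDist_zero_of_mem hzA))
    (by simp) hγ
  obtain ⟨bs, hbsA, hbsz, -⟩ := pull2 hA' z z 0 0 γ
    (le_of_eq (Metric.infDist_zero_of_mem hzA')) (le_of_eq (Metric.infDist_zero_of_mem hzA'))
    (by simp) hγ
  have hasz' : dist as z ≤ γ := by linarith
  have hbsz' : dist bs z ≤ γ := by linarith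
  have hab : dist as bs ≤ 2*γ := by
    have := dist_triangle as z bs
    have := dist_comm bs z ▸ hbsz'
    linarith [dist_comm z bs ▸ hbsz']
  -- measure
  obtain ⟨n, hn⟩ := exists_nat_ge ((max (dist as w) (dist bs w)) / (2*γ))
  have h2γ : (0:ℝ) < 2*γ := by linarith
  have hmeas : max (dist as w) (dist bs w) ≤ τ + 2*γ + n * (2*γ) := by
    have := (div_le_iff₀ h2γ).1 hn
    linarith
  obtain ⟨a', ha', b', hb', hgap, hMf, hMflo, htrava, htravb⟩ :=
    TL hX hA hA' w τ hτA hτB n as bs (2*γ) γ hasA hbsA (by linarith) hγ (by linarith)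
      hab hmeas
  -- midpoint
  obtain ⟨m, hma, hmb, -⟩ := mid3 hX a' b' b' (3*γ/2+γ) (3*γ/2+γ) (3*γ/2+γ) γ
    (by linarith) (by linarith) (by linarith) (by linarith) (by linarith)
    (by simp [dist_self]; linarith) hγ
  have hma' : dist m a' ≤ 7*γ/2 := by linarith
  have hmb' : dist m b' ≤ 7*γ/2 := by linarith
  set M0 := max (dist as w) (dist bs w) with hM0def
  set Mf := max (dist a' w) (dist b' w) with hMfdef
  have hM0up : M0 ≤ dist z w + γ := by
    refine max_le ?_ ?_
    · have := dist_triangle as z w; linarith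
    · have := dist_triangle bs z w; linarith
  have ha'w : dist a' w ≤ Mf := le_max_left _ _
  have hb'w : dist b' w ≤ Mf := le_max_right _ _
  have ha'wlo : Mf - (3*γ) ≤ dist a' w := by
    rcases max_cases (dist a' w) (dist b' w) with ⟨hm1, _⟩ | ⟨hm1, _⟩
    · rw [hMfdef, hm1]; linarith
    · have := dist_triangle b' a' w
      have hcomm := dist_comm b' a' ▸ hgap
      rw [hMfdef, hm1]
      linarith [dist_comm a' b' ▸ hgap]
  have hinfA : Metric.infDist m A ≤ 4*γ :=
    le_trans (Metric.infDist_le_dist_of_mem ha') (by linarith)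
  have hinfB : Metric.infDist m A' ≤ 4*γ :=
    le_trans (Metric.infDist_le_dist_of_mem hb') (by linarith)
  have hza' : dist z a' ≤ dist z w + 3*γ - Mf := by
    have h1 := dist_triangle z as a'
    have h2 := dist_comm as z ▸ hasz'
    linarith [dist_comm z as ▸ hasz']
  refine ⟨m, hinfA, hinfB, ?_, ?_, ?_⟩
  · have h1 : dist z m ≤ dist z a' + dist m a' := by
      have h := dist_triangle z a' m
      rw [dist_comm a' m] at h
      exact h
    have h2 : dist m w ≤ dist m a' + dist a' w := dist_triangle m a' w
    linarith
  · have h2 : dist m w ≤ dist m a' + dist a' w := dist_triangle m a' w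
    linarith
  · have hminmin : min (dist z w - γ) τ ≤ min M0 τ := by
      refine min_le_min ?_ le_rfl
      have := dist_triangle z as w
      have : dist z w - γ ≤ dist as w := by
        have h3 := dist_comm as z ▸ hasz'
        linarith [dist_triangle z as w, dist_comm z as ▸ hasz']
      exact le_trans this (le_max_left _ _)
    have h4 : dist a' w ≤ dist a' m + dist m w := dist_triangle a' m w
    have h5 := dist_comm m a' ▸ hma'
    linarith [dist_comm a' m ▸ hma']

/-- The main step lemma: from a point of `A ∩ A'` at distance `r + e` from `x`,
produce one at distance about `r + e/2`, nearly between. -/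
lemma ML [CompleteSpace X] (hX : IsAlmostNHyperconvex X 3)
    (hA : IsAlmostExternallyNHyperconvex A 2)
    (hA' : IsAlmostExternallyNHyperconvex A' 2)
    (hAc : IsClosed A) (hA'c : IsClosed A')
    (x : X) (r : ℝ) (hxA : Metric.infDist x A ≤ r) (hxA' : Metric.infDist x A' ≤ r)
    (z : X) (hzA : z ∈ A) (hzA' : z ∈ A') (ω : ℝ)
    (he0 : 0 < dist x z - r) (hω : 0 < ω) (hωe : ω ≤ (dist x z - r)/4) :
    ∃ z' : X, z' ∈ A ∧ z' ∈ A' ∧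
      dist x z' + dist z z' ≤ dist x z + ω ∧
      r + (dist x z - r)/2 - ω ≤ dist x z' ∧
      dist x z' ≤ r + (dist x z - r)/2 + ω := by
  set e := dist x z - r with hedef
  have hr0 : 0 ≤ r := le_trans Metric.infDist_nonneg hxA
  set Q : ℕ → X → Prop := fun k q =>
    Metric.infDist q A ≤ ω/16*(1/2:ℝ)^k ∧ Metric.infDist q A' ≤ ω/16*(1/2:ℝ)^k ∧
    dist x q ≤ r + e/2 + ω/32 + ω/4*(1-(1/2:ℝ)^k) ∧
    r + e/2 - ω/32 - ω/4*(1-(1/2:ℝ)^k) ≤ dist x q ∧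
    dist x q + dist z q ≤ dist x z + ω/16 + ω/2*(1-(1/2:ℝ)^k) with hQdef
  set R : ℕ → X → X → Prop := fun k q q' => dist q q' ≤ ω/8 * (1/2:ℝ)^k with hRdef
  -- base : level with target (x, r+e/2)
  have hbase : ∃ q, Q 0 q := by
    obtain ⟨m, h1, h2, h3, h4, h5⟩ := levelcore hX hA hA' x (r + e/2)
      (by linarith) (by linarith) z hzA hzA' (ω/256) (by linarith)
    have hzxe : dist z x = r + e := by rw [dist_comm]; linarith
    have hmin : min (dist z x - ω/256) (r + e/2) = r + e/2 := by
      rw [hzxe]; exact min_eq_right (by linarith)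
    rw [hmin] at h5
    rw [dist_comm m x] at h3 h4 h5
    rw [dist_comm z x] at h3
    refine ⟨m, ?_, ?_, ?_, ?_, ?_⟩ <;> simp only [pow_zero, mul_one, sub_self, mul_zero]
    · exact le_trans h1 (by linarith)
    · exact le_trans h2 (by linarith)
    · linarith
    · linarith
    · linarith
  have hstep : ∀ k q, Q k q → ∃ q', Q (k+1) q' ∧ R k q q' := by
    intro k q hq
    obtain ⟨hqA, hqA', hqx1, hqx2, hqsum⟩ := hq
    set p := (1/2:ℝ)^k with hpdef
    have hp0 : 0 < p := by positivity
    have hps : (1/2:ℝ)^(k+1) = p/2 := by rw [hpdef, pow_succ]; ring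
    have hωp : 0 < ω * p := mul_pos hω hp0
    obtain ⟨m, h1, h2, h3, h4, h5⟩ := levelcore hX hA hA' q (ω/16*p) hqA hqA'
      z hzA hzA' (ω/256*p) (by positivity)
    have hmq : dist q m ≤ ω/16*p + 7*(ω/256*p) := by
      rw [dist_comm q m]; exact h4
    have htri1 : dist x m ≤ dist x q + dist q m := dist_triangle x q m
    have htri2 : dist x q ≤ dist x m + dist m q := dist_triangle x m q
    have htri3 : dist z m ≤ dist z q + dist q m := dist_triangle z q m
    have hmq' : dist m q = dist q m := dist_comm m q
    refine ⟨m, ⟨?_, ?_, ?_, ?_, ?_⟩, ?_⟩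
    · rw [hps]; linarith
    · rw [hps]; linarith
    · rw [hps]; linarith
    · rw [hps]; linarith
    · rw [hps]; linarith
    · linarith
  obtain ⟨q0, hq0⟩ := hbase
  obtain ⟨f, -, hQf, hRf⟩ := build_seq Q R q0 hq0 hstep
  have hcauchy : CauchySeq f := by
    apply cauchySeq_of_le_geometric (1/2 : ℝ) (ω/8) (by norm_num)
    intro n
    exact hRf n
  obtain ⟨zstar, hzstar⟩ := cauchySeq_tendsto_of_complete hcauchy
  have hpow0 : Filter.Tendsto (fun k : ℕ => (ω/16) * (1/2:ℝ)^k) Filter.atTop (nhds 0) := by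
    have := tendsto_pow_atTop_nhds_zero_of_lt_one (by norm_num : (0:ℝ) ≤ 1/2) (by norm_num)
    simpa using this.const_mul (ω/16)
  have hinfA : Metric.infDist zstar A = 0 := by
    have h1 : Filter.Tendsto (fun k => Metric.infDist (f k) A) Filter.atTop
        (nhds (Metric.infDist zstar A)) :=
      ((Metric.continuous_infDist_pt A).tendsto zstar).comp hzstar
    have h2 : Metric.infDist zstar A ≤ 0 :=
      le_of_tendsto_of_tendsto' h1 hpow0 (fun k => (hQf k).1)
    exact le_antisymm h2 Metric.infDist_nonneg
  have hinfB : Metric.infDist zstar A' = 0 := by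
    have h1 : Filter.Tendsto (fun k => Metric.infDist (f k) A') Filter.atTop
        (nhds (Metric.infDist zstar A')) :=
      ((Metric.continuous_infDist_pt A').tendsto zstar).comp hzstar
    have h2 : Metric.infDist zstar A' ≤ 0 :=
      le_of_tendsto_of_tendsto' h1 hpow0 (fun k => (hQf k).2.1)
    exact le_antisymm h2 Metric.infDist_nonneg
  have hmemA : zstar ∈ A := (hAc.mem_iff_infDist_zero ⟨z, hzA⟩).2 hinfA
  have hmemB : zstar ∈ A' := (hA'c.mem_iff_infDist_zero ⟨z, hzA'⟩).2 hinfB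
  have hdx : Filter.Tendsto (fun k => dist x (f k)) Filter.atTop (nhds (dist x zstar)) :=
    Filter.Tendsto.dist tendsto_const_nhds hzstar
  have hdz : Filter.Tendsto (fun k => dist z (f k)) Filter.atTop (nhds (dist z zstar)) :=
    Filter.Tendsto.dist tendsto_const_nhds hzstar
  have hppos : ∀ k : ℕ, (0:ℝ) < (1/2:ℝ)^k := fun k => by positivity
  have hple : ∀ k : ℕ, (1/2:ℝ)^k ≤ 1 := fun k =>
    pow_le_one₀ (by norm_num) (by norm_num)
  refine ⟨zstar, hmemA, hmemB, ?_, ?_, ?_⟩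
  · have hsum : Filter.Tendsto (fun k => dist x (f k) + dist z (f k)) Filter.atTop
        (nhds (dist x zstar + dist z zstar)) := hdx.add hdz
    refine le_of_tendsto hsum (Filter.Eventually.of_forall (fun k => ?_))
    have := (hQf k).2.2.2.2
    have hk1 := mul_pos hω (hppos k)
    linarith
  · refine ge_of_tendsto hdx (Filter.Eventually.of_forall (fun k => ?_))
    have := (hQf k).2.2.2.1
    have hk1 : ω * (1/2:ℝ)^k ≤ ω * 1 := by
      exact mul_le_mul_of_nonneg_left (hple k) hω.le
    have hk0 := mul_pos hω (hppos k)
    linarith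
  · refine le_of_tendsto hdx (Filter.Eventually.of_forall (fun k => ?_))
    have := (hQf k).2.2.1
    have hk1 := mul_pos hω (hppos k)
    linarith

/-- Master iteration: starting from `y ∈ A ∩ A'`, converge to a point of `A ∩ A'`
at distance at most `r` from `x`, still close to `y`. -/
lemma master [CompleteSpace X] (hX : IsAlmostNHyperconvex X 3)
    (hA : IsAlmostExternallyNHyperconvex A 2)
    (hA' : IsAlmostExternallyNHyperconvex A' 2)
    (hAc : IsClosed A) (hA'c : IsClosed A')
    (x y : X) (r : ℝ) (hxA : Metric.infDist x A ≤ r) (hxA' : Metric.infDist x A' ≤ r)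
    (hyA : y ∈ A) (hyA' : y ∈ A') (hs : 0 < dist x y - r) (ν : ℝ) (hν : 0 < ν) :
    ∃ zb : X, zb ∈ A ∧ zb ∈ A' ∧ dist x zb ≤ r ∧ dist y zb ≤ (dist x y - r) + ν := by
  set s := dist x y - r with hsdef
  set P : ℕ → X → Prop := fun n z =>
    (z ∈ A ∧ z ∈ A') ∧ r < dist x z ∧ dist x z ≤ r + s*(3/4:ℝ)^n ∧
      dist x z + dist y z ≤ dist x y + ν*(1-(1/2:ℝ)^n) with hPdef
  set R : ℕ → X → X → Prop := fun n z z' => dist z z' ≤ s*(3/4:ℝ)^n with hRdef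
  have hbase : P 0 y := by
    refine ⟨⟨hyA, hyA'⟩, by linarith, by simp; linarith, by simp [dist_self]⟩
  have hstep : ∀ n z, P n z → ∃ z', P (n+1) z' ∧ R n z z' := by
    intro n z hz
    obtain ⟨⟨hzA, hzA'⟩, hlt, hup, hsum⟩ := hz
    set e := dist x z - r with hedef
    have he0 : 0 < e := by linarith
    have hp0 : (0:ℝ) < (1/2:ℝ)^n := by positivity
    set ω := min (e/4) (ν/4*(1/2:ℝ)^n) with hωdef
    have hω : 0 < ω := lt_min (by linarith) (by positivity)
    have hωe : ω ≤ e/4 := min_le_left _ _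
    have hων : ω ≤ ν/4*(1/2:ℝ)^n := min_le_right _ _
    obtain ⟨z', hz'A, hz'A', hbet, hlo2, hup2⟩ :=
      ML hX hA hA' hAc hA'c x r hxA hxA' z hzA hzA' ω he0 hω hωe
    have htriy : dist y z' ≤ dist y z + dist z z' := dist_triangle y z z'
    have hps34 : s*(3/4:ℝ)^(n+1) = 3/4*(s*(3/4:ℝ)^n) := by rw [pow_succ]; ring
    have hps12 : ν*(1-(1/2:ℝ)^(n+1)) = ν*(1-(1/2:ℝ)^n) + (ν/4*(1/2:ℝ)^n)*2 := by
      rw [pow_succ]; ring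
    refine ⟨z', ⟨⟨hz'A, hz'A'⟩, by linarith, ?_, ?_⟩, ?_⟩
    · rw [hps34]; linarith
    · rw [hps12]; linarith
    · show dist z z' ≤ s*(3/4:ℝ)^n
      linarith
  obtain ⟨f, hf0, hPf, hRf⟩ := build_seq P R y hbase hstep
  have hcauchy : CauchySeq f := by
    apply cauchySeq_of_le_geometric (3/4 : ℝ) s (by norm_num)
    intro n
    exact hRf n
  obtain ⟨zb, hzb⟩ := cauchySeq_tendsto_of_complete hcauchy
  have hmemA : zb ∈ A :=
    hAc.mem_of_tendsto hzb (Filter.Eventually.of_forall (fun n => (hPf n).1.1))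
  have hmemB : zb ∈ A' :=
    hA'c.mem_of_tendsto hzb (Filter.Eventually.of_forall (fun n => (hPf n).1.2))
  have hdx : Filter.Tendsto (fun n => dist x (f n)) Filter.atTop (nhds (dist x zb)) :=
    Filter.Tendsto.dist tendsto_const_nhds hzb
  have hdy : Filter.Tendsto (fun n => dist y (f n)) Filter.atTop (nhds (dist y zb)) :=
    Filter.Tendsto.dist tendsto_const_nhds hzb
  have hrhs : Filter.Tendsto (fun n : ℕ => r + s*(3/4:ℝ)^n) Filter.atTop (nhds r) := by
    have h34 := tendsto_pow_atTop_nhds_zero_of_lt_one (by norm_num : (0:ℝ) ≤ 3/4) (by norm_num)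
    have := (h34.const_mul s).const_add r
    simpa using this
  have hxzb : dist x zb ≤ r :=
    le_of_tendsto_of_tendsto' hdx hrhs (fun n => (hPf n).2.2.1)
  have hxzb' : r ≤ dist x zb :=
    ge_of_tendsto hdx (Filter.Eventually.of_forall (fun n => (hPf n).2.1.le))
  have hsumzb : dist x zb + dist y zb ≤ dist x y + ν := by
    refine le_of_tendsto (hdx.add hdy) (Filter.Eventually.of_forall (fun n => ?_))
    have h1 := (hPf n).2.2.2
    have h2 : (0:ℝ) < ν*(1/2:ℝ)^n := by positivity
    linarith
  exact ⟨zb, hmemA, hmemB, hxzb, by linarith⟩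

end transport


theorem almost_externally_two_hyperconvex_pair_intersection
    (X : Type*) [MetricSpace X] [CompleteSpace X] (hX : IsAlmostNHyperconvex X 3)
    (A A' : Set X) (hAc : IsClosed A) (hA'c : IsClosed A')
    (hA : IsAlmostExternallyNHyperconvex A 2) (hA' : IsAlmostExternallyNHyperconvex A' 2)
    (y : X) (hy : y ∈ A ∩ A') (x : X) (r : ℝ)
    (hxA : Metric.infDist x A ≤ r) (hxA' : Metric.infDist x A' ≤ r) :
    (∀ ε > (0 : ℝ), ∀ δ > (0 : ℝ), 0 ≤ dist x y - r →
      (A ∩ A' ∩ Metric.closedBall x (r + δ) ∩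
        Metric.closedBall y (dist x y - r + ε)).Nonempty) ∧
    (∀ δ > (0 : ℝ), (A ∩ A' ∩ Metric.closedBall x (r + δ)).Nonempty) := by
  constructor
  · intro ε hε δ hδ hs0
    rcases eq_or_lt_of_le hs0 with heq | hlt
    · refine ⟨y, ⟨⟨hy, ?_⟩, ?_⟩⟩
      · rw [Metric.mem_closedBall, dist_comm]
        linarith
      · rw [Metric.mem_closedBall, dist_self]
        linarith
    · obtain ⟨zb, h1, h2, h3, h4⟩ := master hX hA hA' hAc hA'c x y r hxA hxA'
        hy.1 hy.2 hlt ε hε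
      refine ⟨zb, ⟨⟨⟨h1, h2⟩, ?_⟩, ?_⟩⟩
      · rw [Metric.mem_closedBall, dist_comm]
        linarith
      · rw [Metric.mem_closedBall, dist_comm]
        linarith
  · intro δ hδ
    rcases le_or_gt (dist x y) r with hle | hlt
    · refine ⟨y, ⟨hy, ?_⟩⟩
      rw [Metric.mem_closedBall, dist_comm]
      linarith
    · obtain ⟨zb, h1, h2, h3, h4⟩ := master hX hA hA' hAc hA'c x y r hxA hxA'
        hy.1 hy.2 (by linarith) 1 one_pos
      refine ⟨zb, ⟨⟨h1, h2⟩, ?_⟩⟩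
      rw [Metric.mem_closedBall, dist_comm]
      linarith
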